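/- With c₁, c₂, λ₁, λ₂ as in Zhao's example and σ(t,y) = λ₁ 1_{|y| ≤ 2√t} + λ₂ 1_{|y| > 2√t}, the coefficient Σ(t,μ) = ∫_ℝ σ(t,y) μ(dy) satisfies Σ(t, N(0,t)) = 1 and Σ(t, N(0,4t)) = 2 for every t > 0. -/

import Mathlib

open MeasureTheory ProbabilityTheory
open scoped NNReal

/-! Both integrals equal `μ{|y| ≤ 2√t} λ₁ + (1 - μ{|y| ≤ 2√t}) λ₂`, and since `N(0, vt)` is the
image of `N(0, v)` under `y ↦ √t y`, the mass `N(0, vt){|y| ≤ 2√t}` does not depend on `t`: it is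
`c₁` for `v = 1` and `c₂` for `v = 4`. The defining equations of `λ₁, λ₂` then give `1` and `2`. -/

lemma integral_ite_const {α : Type*} [MeasurableSpace α] (μ : Measure α) [IsProbabilityMeasure μ]
    {p : α → Prop} [DecidablePred p] (hp : MeasurableSet {x | p x}) (a b : ℝ) :
    ∫ x, (if p x then a else b) ∂μ = μ.real {x | p x} * a + (1 - μ.real {x | p x}) * b := by
  change ∫ x, Set.piecewise {x | p x} (fun _ ↦ a) (fun _ ↦ b) x ∂μ = _
  rw [integral_piecewise hp (integrable_const a).integrableOn (integrable_const b).integrableOn,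
    setIntegral_const, setIntegral_const, probReal_compl_eq_one_sub hp, smul_eq_mul, smul_eq_mul]

lemma gaussianReal_abs_le_mul_sqrt (v : ℝ≥0) (a : ℝ) {t : ℝ} (ht : 0 < t) :
    gaussianReal 0 (v * t).toNNReal {y | |y| ≤ a * √t} = gaussianReal 0 v (Set.Icc (-a) a) := by
  have hvar : NNReal.mk (√t ^ 2) (sq_nonneg _) * v = (v * t).toNNReal := by
    ext
    rw [NNReal.coe_mul, NNReal.coe_mk, Real.sq_sqrt ht.le, Real.coe_toNNReal _ (by positivity),
      mul_comm]
  have hmap := gaussianReal_map_const_mul (μ := 0) (v := v) √t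
  rw [mul_zero, hvar] at hmap
  have hsqrt : 0 < √t := Real.sqrt_pos.mpr ht
  rw [← hmap, Measure.map_apply (measurable_const_mul _)
    (measurableSet_le (by fun_prop) measurable_const)]
  congr 1
  ext x
  simp [← abs_le, abs_mul, abs_of_pos hsqrt, mul_comm a, mul_le_mul_iff_right₀ hsqrt]

/-- In Zhao's example, with `σ(t,y) = λ₁ 1_{|y|≤2√t} + λ₂ 1_{|y|>2√t}` and
`Σ(t,μ) = ∫ σ(t,y) μ(dy)`, one has `Σ(t, N(0,t)) = 1` and `Σ(t, N(0,4t)) = 2` for all `t > 0`. -/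
theorem zhao_sigma_values (l1 l2 : ℝ)
    (h1 : (gaussianReal 0 1 (Set.Icc (-2 : ℝ) 2)).toReal * l1 +
      (1 - (gaussianReal 0 1 (Set.Icc (-2 : ℝ) 2)).toReal) * l2 = 1)
    (h2 : (gaussianReal 0 4 (Set.Icc (-2 : ℝ) 2)).toReal * l1 +
      (1 - (gaussianReal 0 4 (Set.Icc (-2 : ℝ) 2)).toReal) * l2 = 2)
    (σ : ℝ → ℝ → ℝ)
    (hσ : ∀ t y, σ t y = if |y| ≤ 2 * Real.sqrt t then l1 else l2) :
    ∀ t : ℝ, 0 < t →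
      (∫ y, σ t y ∂(gaussianReal 0 t.toNNReal)) = 1 ∧
      (∫ y, σ t y ∂(gaussianReal 0 (4 * t).toNNReal)) = 2 := by
  intro t ht
  have hA : MeasurableSet {y : ℝ | |y| ≤ 2 * √t} := measurableSet_le (by fun_prop) measurable_const
  have hmass₁ : (gaussianReal 0 t.toNNReal).real {y | |y| ≤ 2 * √t}
      = (gaussianReal 0 1 (Set.Icc (-2) 2)).toReal := by
    rw [measureReal_def, ← gaussianReal_abs_le_mul_sqrt 1 2 ht, NNReal.coe_one, one_mul]
  have hmass₄ : (gaussianReal 0 (4 * t).toNNReal).real {y | |y| ≤ 2 * √t}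
      = (gaussianReal 0 4 (Set.Icc (-2) 2)).toReal := by
    rw [measureReal_def, ← gaussianReal_abs_le_mul_sqrt 4 2 ht, NNReal.coe_ofNat]
  simp only [hσ]
  exact ⟨by rw [integral_ite_const _ hA, hmass₁, h1], by rw [integral_ite_const _ hA, hmass₄, h2]⟩
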